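/- Unbiasedness of the classical-shadows estimator for operators (from the proof of Lemma 4.2). Let Z ∈ ℂ^{2^n × 2^n} be unitary and let X, P ∈ 𝒫. Then (1/(3^n · 2^n · 3^n)) · Σ_{A ∈ {σ_x,σ_y,σ_z}^n} Σ_{v ∈ {±1}^n} Σ_{B ∈ {σ_x,σ_y,σ_z}^n} Σ_{w ∈ {±1}^n} |⟨B,w| Z |A,v⟩|² · 3^{|supp(X)|} v^{supp(X)} · 3^{|supp(P)|} w^{supp(P)} · 1[X ⊆ A] · 1[P ⊆ B] = (1/2^n) · tr(P Z X Z†). -/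

import Mathlib

open Complex Matrix
open scoped BigOperators Classical

noncomputable section

/-- The space of `n`-qubit operators, as matrices indexed by bit-strings. -/
abbrev QMat (n : ℕ) := Matrix (Fin n → Fin 2) (Fin n → Fin 2) ℂ

/-- The single-qubit Pauli matrices, indexed so that `0 = σ_I`, `1 = σ_x`, `2 = σ_y`,
`3 = σ_z`. -/
def pauli1 (a : Fin 4) : Matrix (Fin 2) (Fin 2) ℂ :=
  if a = 0 then 1
  else if a = 1 then !![0, 1; 1, 0]
  else if a = 2 then !![0, -Complex.I; Complex.I, 0]
  else !![1, 0; 0, -1]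

/-- The `n`-qubit Pauli (Kronecker product of single-qubit Paulis) described by
`p : Fin n → Fin 4`. -/
def PauliOp {n : ℕ} (p : Fin n → Fin 4) : QMat n :=
  Matrix.of fun x y => ∏ i, pauli1 (p i) (x i) (y i)

/-- The support of a Pauli: the set of qubits where it acts non-trivially. -/
def psupp {n : ℕ} (p : Fin n → Fin 4) : Finset (Fin n) :=
  Finset.univ.filter fun i => p i ≠ 0

/-- The sign `±1` associated to a boolean (`true ↦ +1`, `false ↦ −1`). -/
def sgn (b : Bool) : ℝ := if b then 1 else -1

/-- `v^S = Π_{i ∈ S} v_i` for a sign vector `v : Fin n → Bool`. -/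
def sgnProd {n : ℕ} (S : Finset (Fin n)) (v : Fin n → Bool) : ℝ :=
  ∏ i ∈ S, sgn (v i)

/-- The unit eigenvector of the single-qubit Pauli `σ_x` (`a = 0`), `σ_y` (`a = 1`),
`σ_z` (`a = 2`) with eigenvalue `+1` (`b = true`) or `−1` (`b = false`). -/
def eig1 (a : Fin 3) (b : Bool) : Fin 2 → ℂ :=
  if a = 0 then
    fun j => ((Real.sqrt 2 : ℂ))⁻¹ * (if j = 0 then 1 else (if b then 1 else -1))
  else if a = 1 then
    fun j => ((Real.sqrt 2 : ℂ))⁻¹ * (if j = 0 then 1 else (if b then Complex.I else -Complex.I))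
  else
    fun j => if b then (if j = 0 then 1 else 0) else (if j = 0 then 0 else 1)

/-- The `n`-qubit Pauli-basis eigenvector `|A, v⟩ = ⊗_i |A_i, v_i⟩`, for a basis choice
`A : Fin n → Fin 3` (among `σ_x, σ_y, σ_z`) and signs `v : Fin n → Bool`. -/
def eigvec {n : ℕ} (A : Fin n → Fin 3) (v : Fin n → Bool) : (Fin n → Fin 2) → ℂ :=
  fun x => ∏ i, eig1 (A i) (v i) (x i)

/-- The rank-one projector `|ψ⟩⟨ψ|`. -/
def outer {m : Type*} [Fintype m] (ψ : m → ℂ) : Matrix m m ℂ :=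
  Matrix.vecMulVec ψ (star ψ)

/-- The `n`-qubit Pauli `B_S ⊗ I_{S̄}` which is `B_i` on `i ∈ S` and identity elsewhere. -/
def PauliOnSet {n : ℕ} (B : Fin n → Fin 3) (S : Finset (Fin n)) : QMat n :=
  PauliOp fun i => if i ∈ S then (B i).succ else 0

/-!
The weight `3^{|supp X|} v^{supp X} 1[X ⊆ A]` factors over the qubits, and on one qubit the
weighted sum of the six projectors `|a,b⟩⟨a,b|` is `3 σ_c`: for `c = I` by completeness of each
eigenbasis, for `c ≠ I` by the spectral decomposition of `σ_c`, the only basis the indicator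
keeps. Hence `∑_{A,v} 3^{|supp X|} v^{supp X} 1[X ⊆ A] |A,v⟩⟨A,v| = 3^n X`, and likewise for `P`.
Since `|⟨B,w|Z|A,v⟩|² = tr(|B,w⟩⟨B,w| Z |A,v⟩⟨A,v| Z†)`, the whole sum is `tr(3^n P Z 3^n X Z†)`.
-/

theorem Fintype.prod_sum_sum {ι α β R : Type*} [Fintype ι] [DecidableEq ι] [Fintype α]
    [Fintype β] [CommSemiring R] (f : ι → α → β → R) :
    ∏ i, ∑ a, ∑ b, f i a b = ∑ A : ι → α, ∑ v : ι → β, ∏ i, f i (A i) (v i) := by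
  simp_rw [Fintype.prod_sum]

section Outer

variable {l m : Type*} [Fintype l] [Fintype m]

lemma mul_outer_mul_conjTranspose (M : Matrix l m ℂ) (ψ : m → ℂ) :
    M * outer ψ * Mᴴ = outer (M *ᵥ ψ) := by
  rw [outer, outer, mul_vecMulVec, vecMulVec_mul, star_mulVec]

lemma trace_outer_mul_outer (u φ : m → ℂ) :
    trace (outer u * outer φ) = ((‖star u ⬝ᵥ φ‖ ^ 2 : ℝ) : ℂ) := by
  have hconj : u ⬝ᵥ star φ = star (star u ⬝ᵥ φ) := by
    rw [← star_dotProduct_star, star_star, dotProduct_comm]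
  rw [outer, outer, vecMulVec_mul_vecMulVec, trace_vecMulVec, dotProduct_smul, smul_eq_mul, hconj,
    Complex.ofReal_pow, ← Complex.mul_conj']
  rfl

end Outer

lemma ofReal_sqrt_two_sq : ((Real.sqrt 2 : ℝ) : ℂ) ^ 2 = 2 := by
  rw [← Complex.ofReal_pow, Real.sq_sqrt zero_le_two, Complex.ofReal_ofNat]

lemma sum_outer_eig1 (a : Fin 3) : ∑ b, outer (eig1 a b) = 1 := by
  ext i j
  fin_cases a <;> fin_cases i <;> fin_cases j <;>
    simp [outer, eig1, vecMulVec_apply] <;> ring_nf <;> simp [ofReal_sqrt_two_sq]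

lemma sum_sgn_smul_outer_eig1 (a : Fin 3) :
    ∑ b, (sgn b : ℂ) • outer (eig1 a b) = pauli1 a.succ := by
  ext i j
  fin_cases a <;> fin_cases i <;> fin_cases j <;>
    simp [outer, eig1, vecMulVec_apply, sgn, pauli1] <;> ring_nf <;>
    simp [ofReal_sqrt_two_sq] <;> ring

def shadowWeight1 (c : Fin 4) (a : Fin 3) (b : Bool) : ℂ :=
  if c = 0 then 1 else if c = a.succ then 3 * sgn b else 0

lemma sum_shadowWeight1_smul_outer_eig1 (c : Fin 4) :
    ∑ a, ∑ b, shadowWeight1 c a b • outer (eig1 a b) = (3 : ℂ) • pauli1 c := by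
  rcases Fin.eq_zero_or_eq_succ c with rfl | ⟨c, rfl⟩
  · simp only [shadowWeight1, if_true, one_smul, sum_outer_eig1, Finset.sum_const,
      Finset.card_univ, Fintype.card_fin]
    simp [pauli1, ← Nat.cast_smul_eq_nsmul ℂ]
  · rw [Fintype.sum_eq_single c fun a ha => by simp [shadowWeight1, Ne.symm ha]]
    simp only [shadowWeight1, Fin.succ_ne_zero, if_false, if_true, mul_smul,
      ← Finset.smul_sum, sum_sgn_smul_outer_eig1]

section Qubits

variable {n : ℕ}

def shadowWeight (X : Fin n → Fin 4) (A : Fin n → Fin 3) (v : Fin n → Bool) : ℂ :=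
  (3 : ℂ) ^ (psupp X).card * (sgnProd (psupp X) v : ℂ)
    * (if ∀ i, X i = 0 ∨ X i = (A i).succ then 1 else 0)

lemma shadowWeight_eq_prod (X : Fin n → Fin 4) (A : Fin n → Fin 3) (v : Fin n → Bool) :
    shadowWeight X A v = ∏ i, shadowWeight1 (X i) (A i) (v i) := by
  have hind : (if ∀ i, X i = 0 ∨ X i = (A i).succ then (1 : ℂ) else 0)
      = ∏ i, if X i = 0 ∨ X i = (A i).succ then 1 else 0 := by
    simp [Fintype.prod_boole]
  rw [shadowWeight, sgnProd, psupp, Complex.ofReal_prod, Finset.prod_filter, ← Finset.prod_const,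
    Finset.prod_filter, hind, ← Finset.prod_mul_distrib, ← Finset.prod_mul_distrib]
  refine Finset.prod_congr rfl fun i _ => ?_
  by_cases h : X i = 0 <;> simp [shadowWeight1, h]

lemma outer_eigvec_apply (A : Fin n → Fin 3) (v : Fin n → Bool) (x y : Fin n → Fin 2) :
    outer (eigvec A v) x y = ∏ i, outer (eig1 (A i) (v i)) (x i) (y i) := by
  simp [outer, eigvec, vecMulVec_apply, Finset.prod_mul_distrib]

lemma sum_shadowWeight_smul_outer_eigvec (X : Fin n → Fin 4) :
    ∑ A, ∑ v, shadowWeight X A v • outer (eigvec A v) = (3 : ℂ) ^ n • PauliOp X := by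
  ext x y
  have hqubit := fun i => congrFun₂ (sum_shadowWeight1_smul_outer_eig1 (X i)) (x i) (y i)
  simp only [Matrix.sum_apply, Matrix.smul_apply, smul_eq_mul] at hqubit
  simp only [Matrix.sum_apply, Matrix.smul_apply, smul_eq_mul, shadowWeight_eq_prod,
    outer_eigvec_apply, ← Finset.prod_mul_distrib, PauliOp, of_apply]
  rw [← Fintype.prod_sum_sum fun i a b => shadowWeight1 (X i) a b * outer (eig1 a b) (x i) (y i)]
  simp only [hqubit, Finset.prod_mul_distrib, Finset.prod_const, Finset.card_univ,
    Fintype.card_fin]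

end Qubits

theorem classical_shadows_unbiased_general (n : ℕ) (Z : QMat n) (X P : Fin n → Fin 4) :
    ((3 ^ n * 2 ^ n * 3 ^ n : ℂ))⁻¹ *
        ∑ A : Fin n → Fin 3, ∑ v : Fin n → Bool, ∑ B : Fin n → Fin 3, ∑ w : Fin n → Bool,
          ((‖star (eigvec B w) ⬝ᵥ Z.mulVec (eigvec A v)‖ ^ 2 : ℝ) : ℂ)
            * (3 : ℂ) ^ (psupp X).card * (sgnProd (psupp X) v : ℂ)
            * (3 : ℂ) ^ (psupp P).card * (sgnProd (psupp P) w : ℂ)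
            * (if ∀ i, X i = 0 ∨ X i = (A i).succ then 1 else 0)
            * (if ∀ i, P i = 0 ∨ P i = (B i).succ then 1 else 0)
      = ((2 ^ n : ℂ))⁻¹ * Matrix.trace (PauliOp P * Z * PauliOp X * Zᴴ) := by
  calc _ = ((3 ^ n * 2 ^ n * 3 ^ n : ℂ))⁻¹ * ∑ A, ∑ v, ∑ B, ∑ w,
          trace (shadowWeight P B w • outer (eigvec B w)
            * (Z * (shadowWeight X A v • outer (eigvec A v)) * Zᴴ)) := by
        congr 1
        refine Finset.sum_congr rfl fun A _ => Finset.sum_congr rfl fun v _ =>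
          Finset.sum_congr rfl fun B _ => Finset.sum_congr rfl fun w _ => ?_
        simp only [mul_smul_comm, smul_mul_assoc, mul_outer_mul_conjTranspose, trace_smul,
          trace_outer_mul_outer, smul_eq_mul, shadowWeight]
        ring
    _ = ((3 ^ n * 2 ^ n * 3 ^ n : ℂ))⁻¹
          * trace ((∑ B, ∑ w, shadowWeight P B w • outer (eigvec B w))
          * (Z * (∑ A, ∑ v, shadowWeight X A v • outer (eigvec A v)) * Zᴴ)) := by
        simp only [Finset.sum_mul, Finset.mul_sum, trace_sum]
    _ = _ := by
        rw [sum_shadowWeight_smul_outer_eigvec, sum_shadowWeight_smul_outer_eigvec]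
        simp only [mul_smul_comm, smul_mul_assoc, trace_smul, smul_eq_mul, ← Matrix.mul_assoc]
        field_simp

/-- from the proof of Lemma 4.2: unbiasedness of the classical-shadows
estimator for operators. -/
theorem classical_shadows_unbiased (n : ℕ) (Z : QMat n)
    (hZ : Z ∈ Matrix.unitaryGroup (Fin n → Fin 2) ℂ) (X P : Fin n → Fin 4) :
    ((3 ^ n * 2 ^ n * 3 ^ n : ℂ))⁻¹ *
        ∑ A : Fin n → Fin 3, ∑ v : Fin n → Bool, ∑ B : Fin n → Fin 3, ∑ w : Fin n → Bool,
          ((‖star (eigvec B w) ⬝ᵥ Z.mulVec (eigvec A v)‖ ^ 2 : ℝ) : ℂ)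
            * (3 : ℂ) ^ (psupp X).card * (sgnProd (psupp X) v : ℂ)
            * (3 : ℂ) ^ (psupp P).card * (sgnProd (psupp P) w : ℂ)
            * (if ∀ i, X i = 0 ∨ X i = (A i).succ then 1 else 0)
            * (if ∀ i, P i = 0 ∨ P i = (B i).succ then 1 else 0)
      = ((2 ^ n : ℂ))⁻¹ * Matrix.trace (PauliOp P * Z * PauliOp X * Zᴴ) :=
  classical_shadows_unbiased_general n Z X P
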